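/- Let W and V be unitary operators on a complex Hilbert space H such that VW = W_L ⊕ W_R with respect to an orthogonal decomposition H = H_L ⊕ H_R (i.e., H_L and H_R are invariant for VW, with W_L = (VW)|_{H_L} and W_R = (VW)|_{H_R}). Let H_C be a closed subspace containing the perturbation subspace H_V = closure of (V−1)H and satisfying P_L H_C ⊂ H_C, where P_L is the orthogonal projection onto H_L; set H_LC = H_C ∩ H_L and H_CR = H_C ∩ H_R, so that H_C = H_LC ⊕ H_CR. Then the Schur function f of H_C with respect to W satisfies f(z) = (f_L(z) ⊕ f_R(z)) V_C for all z in the open unit disk, where f_L is the Schur function of H_LC with respect to W_L, f_R is the Schur function of H_CR with respect to W_R, and V_C = V|_{H_C}. -/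

import Mathlib

open Complex Filter Set Metric
open scoped InnerProductSpace

set_option linter.unusedSectionVars false

/-- The Schur function of the subspace `Kc` with respect to the operator `U`, as the
compression `P_C (U - z P_C^⊥)⁻¹ P_C`, an operator on the ambient space vanishing on
`Kc^⊥` whose restriction to `Kc` is the usual Schur function. -/
noncomputable def schurComp {K : Type*} [NormedAddCommGroup K] [InnerProductSpace ℂ K]
    (U : K →L[ℂ] K) (Kc : Submodule ℂ K) [Kc.HasOrthogonalProjection] (z : ℂ) :
    K →L[ℂ] K :=
  (Kc.subtypeL ∘L Kc.orthogonalProjectionOnto) ∘L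
    Ring.inverse (U - z • (1 - Kc.subtypeL ∘L Kc.orthogonalProjectionOnto)) ∘L
    (Kc.subtypeL ∘L Kc.orthogonalProjectionOnto)

section Statement13Aux

variable {H : Type*} [NormedAddCommGroup H] [InnerProductSpace ℂ H] [CompleteSpace H]

private lemma projL_mem (E : Submodule ℂ H) [Submodule.HasOrthogonalProjection E] (x : H) :
    (E.subtypeL ∘L Submodule.orthogonalProjectionOnto E) x ∈ E := (Submodule.orthogonalProjectionOnto E x).2

private lemma projL_of_mem {E : Submodule ℂ H} [Submodule.HasOrthogonalProjection E] {x : H}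
    (hx : x ∈ E) : (E.subtypeL ∘L Submodule.orthogonalProjectionOnto E) x = x :=
  Submodule.starProjection_eq_self_iff.mpr hx

private lemma projL_of_orthogonal {E : Submodule ℂ H} [Submodule.HasOrthogonalProjection E] {x : H}
    (hx : x ∈ Eᗮ) : (E.subtypeL ∘L Submodule.orthogonalProjectionOnto E) x = 0 := by
  simp [Submodule.orthogonalProjectionOnto_apply_of_mem_orthogonal hx]

private lemma projL_sub_mem (E : Submodule ℂ H) [Submodule.HasOrthogonalProjection E] (x : H) :
    x - (E.subtypeL ∘L Submodule.orthogonalProjectionOnto E) x ∈ Eᗮ :=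
  Submodule.sub_starProjection_mem_orthogonal x

private lemma commute_one_sub {R : Type*} [Ring R] {a b : R} (h : a * b = b * a) :
    a * (1 - b) = (1 - b) * a := by
  rw [mul_sub, mul_one, sub_mul, one_mul, h]

private lemma ringInverse_eq_of_mul {M : Type*} [MonoidWithZero M] {a b : M}
    (h1 : a * b = 1) (h2 : b * a = 1) : Ring.inverse a = b :=
  Ring.inverse_unit ⟨a, b, h1, h2⟩

private lemma projL_commute (E F : Submodule ℂ H)
    [CompleteSpace E] [CompleteSpace F]
    (h : ∀ v ∈ F, (E.subtypeL ∘L Submodule.orthogonalProjectionOnto E) v ∈ F) :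
    (E.subtypeL ∘L Submodule.orthogonalProjectionOnto E) * (F.subtypeL ∘L Submodule.orthogonalProjectionOnto F)
      = (F.subtypeL ∘L Submodule.orthogonalProjectionOnto F) * (E.subtypeL ∘L Submodule.orthogonalProjectionOnto E) := by
  have hsaE : IsSelfAdjoint (E.subtypeL ∘L Submodule.orthogonalProjectionOnto E) :=
    isSelfAdjoint_starProjection E
  have hsaF : IsSelfAdjoint (F.subtypeL ∘L Submodule.orthogonalProjectionOnto F) :=
    isSelfAdjoint_starProjection F
  have h1 : (F.subtypeL ∘L Submodule.orthogonalProjectionOnto F) *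
      ((E.subtypeL ∘L Submodule.orthogonalProjectionOnto E) * (F.subtypeL ∘L Submodule.orthogonalProjectionOnto F))
      = (E.subtypeL ∘L Submodule.orthogonalProjectionOnto E) * (F.subtypeL ∘L Submodule.orthogonalProjectionOnto F) :=
    ContinuousLinearMap.ext fun x => projL_of_mem (h _ (projL_mem F x))
  have h2 := congrArg star h1
  simp only [star_mul, hsaE.star_eq, hsaF.star_eq, ← mul_assoc] at h2
  have h2' : (F.subtypeL ∘L Submodule.orthogonalProjectionOnto F) *
      ((E.subtypeL ∘L Submodule.orthogonalProjectionOnto E) * (F.subtypeL ∘L Submodule.orthogonalProjectionOnto F))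
      = (F.subtypeL ∘L Submodule.orthogonalProjectionOnto F) * (E.subtypeL ∘L Submodule.orthogonalProjectionOnto E) := by
    rw [← mul_assoc]; exact h2
  exact h1.symm.trans h2'

private lemma claimA (HL HC : Submodule ℂ H) [CompleteSpace HL] [CompleteSpace HC]
    [CompleteSpace (Submodule.comap HL.subtype HC)]
    (hPL : ∀ v ∈ HC, (HL.subtypeL ∘L Submodule.orthogonalProjectionOnto HL) v ∈ HC)
    (v : HL) :
    ((Submodule.orthogonalProjectionOnto (Submodule.comap HL.subtype HC) v : HL) : H)
      = (Submodule.orthogonalProjectionOnto HC (v : H) : H) := by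
  refine (Submodule.eq_starProjection_of_mem_orthogonal ?_ ?_).symm
  · exact Submodule.mem_comap.mp (Submodule.orthogonalProjectionOnto (Submodule.comap HL.subtype HC) v).2
  · rw [Submodule.mem_orthogonal]
    intro u hu
    have hd : (v : H) - ((Submodule.orthogonalProjectionOnto (Submodule.comap HL.subtype HC) v : HL) : H)
        = ((v - (Submodule.orthogonalProjectionOnto (Submodule.comap HL.subtype HC) v : HL) : HL) : H) := by
      simp
    rw [hd]
    have hw : v - (Submodule.orthogonalProjectionOnto (Submodule.comap HL.subtype HC) v : HL)
        ∈ (Submodule.comap HL.subtype HC)ᗮ :=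
      Submodule.sub_starProjection_mem_orthogonal (K := Submodule.comap HL.subtype HC) v
    have huE1 : Submodule.orthogonalProjectionOnto HL u ∈ Submodule.comap HL.subtype HC :=
      Submodule.mem_comap.mpr (hPL u hu)
    have key1 : ⟪((Submodule.orthogonalProjectionOnto HL u : HL) : H),
        ((v - (Submodule.orthogonalProjectionOnto (Submodule.comap HL.subtype HC) v : HL) : HL) : H)⟫_ℂ = 0 := by
      rw [← Submodule.coe_inner]
      exact Submodule.inner_right_of_mem_orthogonal huE1 hw
    have key2 : ⟪u - ((Submodule.orthogonalProjectionOnto HL u : HL) : H),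
        ((v - (Submodule.orthogonalProjectionOnto (Submodule.comap HL.subtype HC) v : HL) : HL) : H)⟫_ℂ = 0 :=
      Submodule.inner_left_of_mem_orthogonal (SetLike.coe_mem _)
        (Submodule.sub_starProjection_mem_orthogonal u)
    calc ⟪u, ((v - (Submodule.orthogonalProjectionOnto (Submodule.comap HL.subtype HC) v : HL) : HL) : H)⟫_ℂ
        = ⟪(u - ((Submodule.orthogonalProjectionOnto HL u : HL) : H)) + ((Submodule.orthogonalProjectionOnto HL u : HL) : H),
            ((v - (Submodule.orthogonalProjectionOnto (Submodule.comap HL.subtype HC) v : HL) : HL) : H)⟫_ℂ := by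
          rw [sub_add_cancel]
      _ = 0 := by rw [inner_add_left, key1, key2, add_zero]

private lemma side_piece (HL HC : Submodule ℂ H) [CompleteSpace HL] [CompleteSpace HC]
    [CompleteSpace (Submodule.comap HL.subtype HC)]
    (hPL : ∀ v ∈ HC, (HL.subtypeL ∘L Submodule.orthogonalProjectionOnto HL) v ∈ HC)
    (z : ℂ) (WL : HL →L[ℂ] HL) (B Bi : H →L[ℂ] H)
    (hBBi : B * Bi = 1) (hBiB : Bi * B = 1)
    (hB : ∀ v : HL, B (v : H) =
      (WL v : H) - z • ((v : H) - (HC.subtypeL ∘L Submodule.orthogonalProjectionOnto HC) (v : H)))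
    (hBPL : ∀ x : H, B ((HL.subtypeL ∘L Submodule.orthogonalProjectionOnto HL) x)
      = (HL.subtypeL ∘L Submodule.orthogonalProjectionOnto HL) (B x)) :
    (HC.subtypeL ∘L Submodule.orthogonalProjectionOnto HC) *
        ((HL.subtypeL ∘L Submodule.orthogonalProjectionOnto HL) * Bi * (HL.subtypeL ∘L Submodule.orthogonalProjectionOnto HL)) *
        (HC.subtypeL ∘L Submodule.orthogonalProjectionOnto HC)
      = HL.subtypeL ∘L schurComp WL (Submodule.comap HL.subtype HC) z ∘L
          Submodule.orthogonalProjectionOnto HL := by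
  have e1 : ∀ y, B (Bi y) = y := fun y => by
    have := DFunLike.congr_fun hBBi y; simpa using this
  have e2 : ∀ y, Bi (B y) = y := fun y => by
    have := DFunLike.congr_fun hBiB y; simpa using this
  have hBiPL : ∀ x : H, Bi ((HL.subtypeL ∘L Submodule.orthogonalProjectionOnto HL) x)
      = (HL.subtypeL ∘L Submodule.orthogonalProjectionOnto HL) (Bi x) := by
    intro x
    conv_lhs => rw [← e1 x, ← hBPL (Bi x)]
    rw [e2]
  -- the coe of the block operator is B
  have hBLco : ∀ v : HL,
      (((WL - z • (1 - (Submodule.comap HL.subtype HC).subtypeL ∘L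
          Submodule.orthogonalProjectionOnto (Submodule.comap HL.subtype HC))) v : HL) : H) = B (v : H) := by
    intro v
    rw [hB v]
    simp only [ContinuousLinearMap.sub_apply, ContinuousLinearMap.smul_apply,
      ContinuousLinearMap.one_apply, ContinuousLinearMap.comp_apply, Submodule.subtypeL_apply,
      AddSubgroupClass.coe_sub, SetLike.val_smul]
    rw [claimA HL HC hPL v]
  -- the inverse of the block operator
  have h1 : (WL - z • (1 - (Submodule.comap HL.subtype HC).subtypeL ∘L
        Submodule.orthogonalProjectionOnto (Submodule.comap HL.subtype HC))) *
      ((Submodule.orthogonalProjectionOnto HL) ∘L (Bi ∘L HL.subtypeL)) = 1 := by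
    refine ContinuousLinearMap.ext fun v => Subtype.ext ?_
    have hc : ((((Submodule.orthogonalProjectionOnto HL) ∘L (Bi ∘L HL.subtypeL)) v : HL) : H)
        = (HL.subtypeL ∘L Submodule.orthogonalProjectionOnto HL) (Bi (v : H)) := rfl
    rw [ContinuousLinearMap.mul_apply, hBLco, hc, hBPL, e1]
    simp only [ContinuousLinearMap.one_apply, projL_of_mem v.2]
  have h2 : ((Submodule.orthogonalProjectionOnto HL) ∘L (Bi ∘L HL.subtypeL)) *
      (WL - z • (1 - (Submodule.comap HL.subtype HC).subtypeL ∘L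
        Submodule.orthogonalProjectionOnto (Submodule.comap HL.subtype HC))) = 1 := by
    refine ContinuousLinearMap.ext fun v => ?_
    simp only [ContinuousLinearMap.mul_apply, ContinuousLinearMap.comp_apply,
      Submodule.subtypeL_apply, ContinuousLinearMap.one_apply]
    rw [hBLco v, e2, Submodule.orthogonalProjectionOnto_mem_subspace_eq_self]
  have hRinv : Ring.inverse (WL - z • (1 - (Submodule.comap HL.subtype HC).subtypeL ∘L
      Submodule.orthogonalProjectionOnto (Submodule.comap HL.subtype HC)))
      = (Submodule.orthogonalProjectionOnto HL) ∘L (Bi ∘L HL.subtypeL) :=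
    ringInverse_eq_of_mul h1 h2
  have hcomm := projL_commute HL HC hPL
  refine ContinuousLinearMap.ext fun x => ?_
  rw [schurComp, hRinv]
  simp only [ContinuousLinearMap.mul_apply, ContinuousLinearMap.comp_apply,
    Submodule.subtypeL_apply]
  simp only [claimA HL HC hPL]
  have hcx : ((Submodule.orthogonalProjectionOnto HL ((Submodule.orthogonalProjectionOnto HC x : HC) : H) : HL) : H)
      = ((Submodule.orthogonalProjectionOnto HC ((Submodule.orthogonalProjectionOnto HL x : HL) : H) : HC) : H) := by
    simpa using DFunLike.congr_fun hcomm x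
  rw [hcx]

private lemma projL_idem (E : Submodule ℂ H) [Submodule.HasOrthogonalProjection E] :
    (E.subtypeL ∘L Submodule.orthogonalProjectionOnto E) * (E.subtypeL ∘L Submodule.orthogonalProjectionOnto E)
      = E.subtypeL ∘L Submodule.orthogonalProjectionOnto E :=
  ContinuousLinearMap.ext fun x => projL_of_mem (projL_mem E x)

private lemma assemble {R : Type*} [Ring R] (PC PL PR B Bi V X Y : R)
    (hPR : PR = 1 - PL)
    (hBBi : B * Bi = 1) (hBiB : Bi * B = 1)
    (hBPL : B * PL = PL * B)
    (hVPC : V * PC = PC * (V * PC))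
    (hPLPL : PL * PL = PL)
    (hX : PC * (PL * Bi * PL) * PC = X)
    (hY : PC * (PR * Bi * PR) * PC = Y) :
    PC * ((Bi * V) * PC) = (X + Y) * (V * PC) := by
  have hBiPL : Bi * PL = PL * Bi := by
    have h1 : Bi * (PL * (B * Bi)) = Bi * (B * (PL * Bi)) := by
      rw [← mul_assoc PL B, ← hBPL, mul_assoc]
    rw [hBBi, mul_one] at h1
    rwa [← mul_assoc, hBiB, one_mul] at h1
  have hBiPR : Bi * PR = PR * Bi := by
    rw [hPR, mul_sub, sub_mul, mul_one, one_mul, hBiPL]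
  have hPLPR : PL * PR = 0 := by rw [hPR, mul_sub, mul_one, hPLPL, sub_self]
  have hPRPL : PR * PL = 0 := by rw [hPR, sub_mul, one_mul, hPLPL, sub_self]
  have hcross1 : PL * Bi * PR = 0 := by rw [mul_assoc, hBiPR, ← mul_assoc, hPLPR, zero_mul]
  have hcross2 : PR * Bi * PL = 0 := by rw [mul_assoc, hBiPL, ← mul_assoc, hPRPL, zero_mul]
  have hexp : Bi = PL * Bi * PL + PR * Bi * PR := by
    calc Bi = (PL + PR) * Bi * (PL + PR) := by
          rw [hPR, add_sub_cancel, one_mul, mul_one]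
      _ = PL * Bi * PL + PL * Bi * PR + PR * Bi * PL + PR * Bi * PR := by noncomm_ring
      _ = PL * Bi * PL + PR * Bi * PR := by rw [hcross1, hcross2]; abel
  have hsplit : PC * Bi * PC = PC * (PL * Bi * PL) * PC + PC * (PR * Bi * PR) * PC := by
    conv_lhs => rw [hexp]
    rw [mul_add, add_mul]
  calc PC * ((Bi * V) * PC) = PC * (Bi * (V * PC)) := by rw [mul_assoc]
    _ = PC * (Bi * (PC * (V * PC))) := by conv_lhs => rw [hVPC]
    _ = PC * Bi * PC * (V * PC) := by simp only [mul_assoc]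
    _ = (X + Y) * (V * PC) := by rw [hsplit, hX, hY]

end Statement13Aux

/-- Let `VW = W_L ⊕ W_R` be a decoupling of `W` with respect to the
orthogonal decomposition `H = H_L ⊕ H_R`, and let `H_C ⊇ H_V` be a closed subspace with
`P_L H_C ⊆ H_C`, so that `H_C = H_LC ⊕ H_CR` with `H_LC = H_C ∩ H_L`,
`H_CR = H_C ∩ H_R`. Then the Schur function `f` of `H_C` with respect to `W` satisfies
`f(z) = (f_L(z) ⊕ f_R(z)) V_C` on the unit disk, where `f_{L/R}` are the Schur functions
of `H_LC`/`H_CR` with respect to `W_{L/R}` (all Schur functions realized as compressions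
on the ambient spaces, and `V_C = V|_{H_C}` realized via the projection onto `H_C`). -/
theorem statement13
    {H : Type*} [NormedAddCommGroup H] [InnerProductSpace ℂ H] [CompleteSpace H]
    (W V : H →L[ℂ] H) (hW : W ∈ unitary (H →L[ℂ] H)) (hV : V ∈ unitary (H →L[ℂ] H))
    (HL HR : Submodule ℂ H) [CompleteSpace HL] [CompleteSpace HR]
    (hLR : HR = HLᗮ)
    (hinvL : ∀ v ∈ HL, V (W v) ∈ HL) (hinvR : ∀ v ∈ HR, V (W v) ∈ HR)
    (WL : HL →L[ℂ] HL) (WR : HR →L[ℂ] HR)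
    (hWL : ∀ v : HL, (WL v : H) = V (W (v : H)))
    (hWR : ∀ v : HR, (WR v : H) = V (W (v : H)))
    (HC : Submodule ℂ H) [CompleteSpace HC]
    (hHV : (LinearMap.range ((V - 1 : H →L[ℂ] H) : H →ₗ[ℂ] H)).topologicalClosure ≤ HC)
    (hPL : ∀ v ∈ HC, (HL.subtypeL ∘L HL.orthogonalProjectionOnto) v ∈ HC)
    [CompleteSpace (Submodule.comap HL.subtype HC)]
    [CompleteSpace (Submodule.comap HR.subtype HC)] :
    HC = (HC ⊓ HL) ⊔ (HC ⊓ HR) ∧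
    ∀ z : ℂ, ‖z‖ < 1 →
      schurComp W HC z =
        (HL.subtypeL ∘L schurComp WL (Submodule.comap HL.subtype HC) z ∘L
            HL.orthogonalProjectionOnto +
         HR.subtypeL ∘L schurComp WR (Submodule.comap HR.subtype HC) z ∘L
            HR.orthogonalProjectionOnto) ∘L
          V ∘L (HC.subtypeL ∘L HC.orthogonalProjectionOnto) := by
  subst hLR
  have hWm := Unitary.mem_iff.mp hW
  have hVm := Unitary.mem_iff.mp hV
  have hsub : ∀ y : H, V y - y ∈ HC := by
    intro y
    refine hHV (Submodule.le_topologicalClosure _ ?_)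
    exact LinearMap.mem_range.mpr ⟨y, by simp⟩
  have hVmem : ∀ x ∈ HC, V x ∈ HC := fun x hx => by
    have := HC.add_mem (hsub x) hx
    simpa using this
  have hVfix : ∀ x ∈ HCᗮ, V x = x := by
    intro x hx
    have hstar : (star V) x = x := by
      have h0 : ∀ y : H, ⟪y, (star V) x - x⟫_ℂ = 0 := by
        intro y
        have h1 : ⟪y, (star V) x⟫_ℂ = ⟪V y, x⟫_ℂ := by
          rw [ContinuousLinearMap.star_eq_adjoint, ContinuousLinearMap.adjoint_inner_right]
        have h2 : ⟪V y - y, x⟫_ℂ = 0 :=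
          (Submodule.mem_orthogonal HC x).mp hx _ (hsub y)
        rw [inner_sub_right, h1, ← inner_sub_left]
        exact h2
      have h3 := h0 ((star V) x - x)
      rw [inner_self_eq_zero] at h3
      exact sub_eq_zero.mp h3
    have h4 : (V * star V) x = x := by rw [hVm.2]; rfl
    calc V x = V ((star V) x) := by rw [hstar]
      _ = x := h4
  have hUPL : (V * W) * (HL.subtypeL ∘L Submodule.orthogonalProjectionOnto HL)
      = (HL.subtypeL ∘L Submodule.orthogonalProjectionOnto HL) * (V * W) := by
    refine ContinuousLinearMap.ext fun x => ?_
    simp only [ContinuousLinearMap.mul_apply]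
    have hx : x = (HL.subtypeL ∘L Submodule.orthogonalProjectionOnto HL) x
        + (x - (HL.subtypeL ∘L Submodule.orthogonalProjectionOnto HL) x) := by abel
    have hmem1 : V (W ((HL.subtypeL ∘L Submodule.orthogonalProjectionOnto HL) x)) ∈ HL :=
      hinvL _ (projL_mem HL x)
    have hmem2 : V (W (x - (HL.subtypeL ∘L Submodule.orthogonalProjectionOnto HL) x)) ∈ HLᗮ :=
      hinvR _ (projL_sub_mem HL x)
    conv_rhs => rw [hx]
    rw [map_add, map_add, map_add, projL_of_mem hmem1, projL_of_orthogonal hmem2, add_zero]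
  have hQPL : (HL.subtypeL ∘L Submodule.orthogonalProjectionOnto HL) * (HC.subtypeL ∘L Submodule.orthogonalProjectionOnto HC)
      = (HC.subtypeL ∘L Submodule.orthogonalProjectionOnto HC) * (HL.subtypeL ∘L Submodule.orthogonalProjectionOnto HL) :=
    projL_commute HL HC hPL
  have hPRop : (HLᗮ.subtypeL ∘L Submodule.orthogonalProjectionOnto HLᗮ)
      = 1 - (HL.subtypeL ∘L Submodule.orthogonalProjectionOnto HL) := by
    refine ContinuousLinearMap.ext fun x => ?_
    simp only [ContinuousLinearMap.sub_apply, ContinuousLinearMap.one_apply,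
      ContinuousLinearMap.comp_apply, Submodule.subtypeL_apply,
      Submodule.coe_orthogonalProjectionOnto_apply, Submodule.starProjection_orthogonal_val]
  have hPRmem : ∀ v ∈ HC, (HLᗮ.subtypeL ∘L Submodule.orthogonalProjectionOnto HLᗮ) v ∈ HC := by
    intro v hv
    have h1 := DFunLike.congr_fun hPRop v
    simp only [ContinuousLinearMap.sub_apply, ContinuousLinearMap.one_apply] at h1
    rw [h1]
    exact HC.sub_mem hv (hPL v hv)
  have hdecomp : HC = (HC ⊓ HL) ⊔ (HC ⊓ HLᗮ) := by
    refine le_antisymm ?_ (sup_le inf_le_left inf_le_left)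
    intro x hx
    exact Submodule.mem_sup.mpr
      ⟨(HL.subtypeL ∘L Submodule.orthogonalProjectionOnto HL) x,
        Submodule.mem_inf.mpr ⟨hPL x hx, projL_mem HL x⟩,
        x - (HL.subtypeL ∘L Submodule.orthogonalProjectionOnto HL) x,
        Submodule.mem_inf.mpr ⟨HC.sub_mem hx (hPL x hx), projL_sub_mem HL x⟩, by abel⟩
  refine ⟨hdecomp, fun z hz => ?_⟩
  have hQn : ‖(1 : H →L[ℂ] H) - HC.subtypeL ∘L Submodule.orthogonalProjectionOnto HC‖ ≤ 1 := by
    refine ContinuousLinearMap.opNorm_le_bound _ zero_le_one fun x => ?_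
    have hxv : ((1 : H →L[ℂ] H) - HC.subtypeL ∘L Submodule.orthogonalProjectionOnto HC) x
        = (Submodule.orthogonalProjectionOnto HCᗮ x : H) := by
      simp only [ContinuousLinearMap.sub_apply, ContinuousLinearMap.one_apply,
        ContinuousLinearMap.comp_apply, Submodule.subtypeL_apply,
        Submodule.coe_orthogonalProjectionOnto_apply, Submodule.starProjection_orthogonal_val]
    rw [hxv]
    calc ‖(Submodule.orthogonalProjectionOnto HCᗮ x : H)‖ = ‖Submodule.orthogonalProjectionOnto HCᗮ x‖ := rfl
      _ ≤ 1 * ‖x‖ := (Submodule.orthogonalProjectionOnto HCᗮ).le_of_opNorm_le (Submodule.orthogonalProjectionOnto_norm_le HCᗮ) x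
  have hWunit : IsUnit W := ⟨⟨W, star W, hWm.2, hWm.1⟩, rfl⟩
  have hVunit : IsUnit V := ⟨⟨V, star V, hVm.2, hVm.1⟩, rfl⟩
  have hsm1 : ‖z • ((1 : H →L[ℂ] H) - HC.subtypeL ∘L Submodule.orthogonalProjectionOnto HC)‖ ≤ ‖z‖ := by
    rw [norm_smul]
    calc ‖z‖ * ‖(1 : H →L[ℂ] H) - HC.subtypeL ∘L Submodule.orthogonalProjectionOnto HC‖
        ≤ ‖z‖ * 1 := mul_le_mul_of_nonneg_left hQn (norm_nonneg z)
      _ = ‖z‖ := mul_one _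
  have hsmall : ‖star W * (z • ((1 : H →L[ℂ] H)
      - HC.subtypeL ∘L Submodule.orthogonalProjectionOnto HC))‖ < 1 := by
    rw [CStarRing.norm_mem_unitary_mul _ (Unitary.star_mem hW)]
    exact lt_of_le_of_lt hsm1 hz
  have hAfact : W * (1 - star W * (z • ((1 : H →L[ℂ] H)
        - HC.subtypeL ∘L Submodule.orthogonalProjectionOnto HC)))
      = W - z • (1 - HC.subtypeL ∘L Submodule.orthogonalProjectionOnto HC) := by
    rw [mul_sub, mul_one, ← mul_assoc, hWm.2, one_mul]
  have hA : IsUnit (W - z • ((1 : H →L[ℂ] H) - HC.subtypeL ∘L Submodule.orthogonalProjectionOnto HC)) := by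
    rw [← hAfact]
    exact hWunit.mul (isUnit_one_sub_of_norm_lt_one hsmall)
  have hVQ : V * ((1 : H →L[ℂ] H) - HC.subtypeL ∘L Submodule.orthogonalProjectionOnto HC)
      = 1 - HC.subtypeL ∘L Submodule.orthogonalProjectionOnto HC := by
    refine ContinuousLinearMap.ext fun x => ?_
    simp only [ContinuousLinearMap.mul_apply, ContinuousLinearMap.sub_apply,
      ContinuousLinearMap.one_apply]
    exact hVfix _ (projL_sub_mem HC x)
  have hBA : V * (W - z • ((1 : H →L[ℂ] H) - HC.subtypeL ∘L Submodule.orthogonalProjectionOnto HC))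
      = V * W - z • (1 - HC.subtypeL ∘L Submodule.orthogonalProjectionOnto HC) := by
    rw [mul_sub, mul_smul_comm, hVQ]
  have hB : IsUnit (V * W - z • ((1 : H →L[ℂ] H)
      - HC.subtypeL ∘L Submodule.orthogonalProjectionOnto HC)) := by
    rw [← hBA]
    exact hVunit.mul hA
  have hBBi := Ring.mul_inverse_cancel _ hB
  have hBiB := Ring.inverse_mul_cancel _ hB
  have hAeq : W - z • ((1 : H →L[ℂ] H) - HC.subtypeL ∘L Submodule.orthogonalProjectionOnto HC)
      = star V * (V * W - z • (1 - HC.subtypeL ∘L Submodule.orthogonalProjectionOnto HC)) := by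
    rw [← hBA, ← mul_assoc, hVm.1, one_mul]
  have hAinv : Ring.inverse (W - z • ((1 : H →L[ℂ] H)
        - HC.subtypeL ∘L Submodule.orthogonalProjectionOnto HC))
      = Ring.inverse (V * W - z • ((1 : H →L[ℂ] H)
        - HC.subtypeL ∘L Submodule.orthogonalProjectionOnto HC)) * V := by
    refine ringInverse_eq_of_mul ?_ ?_
    · rw [hAeq]
      calc star V * (V * W - z • ((1 : H →L[ℂ] H) - HC.subtypeL ∘L Submodule.orthogonalProjectionOnto HC))
            * (Ring.inverse (V * W - z • ((1 : H →L[ℂ] H)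
              - HC.subtypeL ∘L Submodule.orthogonalProjectionOnto HC)) * V)
          = star V * (((V * W - z • ((1 : H →L[ℂ] H)
              - HC.subtypeL ∘L Submodule.orthogonalProjectionOnto HC))
            * Ring.inverse (V * W - z • ((1 : H →L[ℂ] H)
              - HC.subtypeL ∘L Submodule.orthogonalProjectionOnto HC))) * V) := by
            simp only [mul_assoc]
        _ = star V * V := by rw [hBBi, one_mul]
        _ = 1 := hVm.1
    · rw [mul_assoc, hBA, hBiB]
  have hBPL : (V * W - z • ((1 : H →L[ℂ] H) - HC.subtypeL ∘L Submodule.orthogonalProjectionOnto HC))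
        * (HL.subtypeL ∘L Submodule.orthogonalProjectionOnto HL)
      = (HL.subtypeL ∘L Submodule.orthogonalProjectionOnto HL)
        * (V * W - z • ((1 : H →L[ℂ] H) - HC.subtypeL ∘L Submodule.orthogonalProjectionOnto HC)) := by
    rw [sub_mul, mul_sub, hUPL]
    congr 1
    rw [smul_mul_assoc, mul_smul_comm]
    congr 1
    rw [sub_mul, mul_sub, one_mul, mul_one, hQPL]
  have hBPR : (V * W - z • ((1 : H →L[ℂ] H) - HC.subtypeL ∘L Submodule.orthogonalProjectionOnto HC))
        * (HLᗮ.subtypeL ∘L Submodule.orthogonalProjectionOnto HLᗮ)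
      = (HLᗮ.subtypeL ∘L Submodule.orthogonalProjectionOnto HLᗮ)
        * (V * W - z • ((1 : H →L[ℂ] H) - HC.subtypeL ∘L Submodule.orthogonalProjectionOnto HC)) := by
    rw [hPRop]
    exact commute_one_sub hBPL
  have hVPC : V * (HC.subtypeL ∘L Submodule.orthogonalProjectionOnto HC)
      = (HC.subtypeL ∘L Submodule.orthogonalProjectionOnto HC)
        * (V * (HC.subtypeL ∘L Submodule.orthogonalProjectionOnto HC)) := by
    refine ContinuousLinearMap.ext fun x => ?_
    simp only [ContinuousLinearMap.mul_apply]
    exact (projL_of_mem (hVmem _ (projL_mem HC x))).symm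
  have hBrelL : ∀ v : HL,
      (V * W - z • ((1 : H →L[ℂ] H) - HC.subtypeL ∘L Submodule.orthogonalProjectionOnto HC)) (v : H)
      = (WL v : H) - z • ((v : H)
        - (HC.subtypeL ∘L Submodule.orthogonalProjectionOnto HC) (v : H)) := by
    intro v
    simp only [ContinuousLinearMap.sub_apply, ContinuousLinearMap.smul_apply,
      ContinuousLinearMap.one_apply, ContinuousLinearMap.mul_apply]
    rw [hWL v]
  have hBrelR : ∀ v : HLᗮ,
      (V * W - z • ((1 : H →L[ℂ] H) - HC.subtypeL ∘L Submodule.orthogonalProjectionOnto HC)) (v : H)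
      = (WR v : H) - z • ((v : H)
        - (HC.subtypeL ∘L Submodule.orthogonalProjectionOnto HC) (v : H)) := by
    intro v
    simp only [ContinuousLinearMap.sub_apply, ContinuousLinearMap.smul_apply,
      ContinuousLinearMap.one_apply, ContinuousLinearMap.mul_apply]
    rw [hWR v]
  have hBPLpt : ∀ x : H,
      (V * W - z • ((1 : H →L[ℂ] H) - HC.subtypeL ∘L Submodule.orthogonalProjectionOnto HC))
        ((HL.subtypeL ∘L Submodule.orthogonalProjectionOnto HL) x)
      = (HL.subtypeL ∘L Submodule.orthogonalProjectionOnto HL)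
        ((V * W - z • ((1 : H →L[ℂ] H) - HC.subtypeL ∘L Submodule.orthogonalProjectionOnto HC)) x) :=
    fun x => DFunLike.congr_fun hBPL x
  have hBPRpt : ∀ x : H,
      (V * W - z • ((1 : H →L[ℂ] H) - HC.subtypeL ∘L Submodule.orthogonalProjectionOnto HC))
        ((HLᗮ.subtypeL ∘L Submodule.orthogonalProjectionOnto HLᗮ) x)
      = (HLᗮ.subtypeL ∘L Submodule.orthogonalProjectionOnto HLᗮ)
        ((V * W - z • ((1 : H →L[ℂ] H) - HC.subtypeL ∘L Submodule.orthogonalProjectionOnto HC)) x) :=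
    fun x => DFunLike.congr_fun hBPR x
  have sideL := side_piece HL HC hPL z WL _ _ hBBi hBiB hBrelL hBPLpt
  have sideR := side_piece HLᗮ HC hPRmem z WR _ _ hBBi hBiB hBrelR hBPRpt
  have key := assemble (HC.subtypeL ∘L Submodule.orthogonalProjectionOnto HC)
    (HL.subtypeL ∘L Submodule.orthogonalProjectionOnto HL) (HLᗮ.subtypeL ∘L Submodule.orthogonalProjectionOnto HLᗮ)
    (V * W - z • ((1 : H →L[ℂ] H) - HC.subtypeL ∘L Submodule.orthogonalProjectionOnto HC))
    (Ring.inverse (V * W - z • ((1 : H →L[ℂ] H) - HC.subtypeL ∘L Submodule.orthogonalProjectionOnto HC)))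
    V _ _ hPRop hBBi hBiB hBPL hVPC (projL_idem HL) sideL sideR
  rw [schurComp, hAinv]
  exact key
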